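/- For every ordinal α ≥ ω₁, the space 𝒳_α of all finite graphs of strictly decreasing partial functions from α to α, topologized as a subspace of {0,1}^(α×α) via characteristic functions, is not bisequential; indeed 𝒳 = 𝒳_{ω₁} embeds homeomorphically into 𝒳_α. -/

import Mathlib

open Cardinal Filter Topology Set

noncomputable section
open Classical

/-- `ω₁`, the first uncountable ordinal, viewed as the linearly ordered type of
all countable ordinals. -/
abbrev Omega1 : Type 1 := ↥(Set.Iio (Cardinal.aleph 1).ord)

/-- The vertical section `A_α = {β : (α, β) ∈ A}`. -/
def vertSection (A : Set (Omega1 × Omega1)) (α : Omega1) : Set Omega1 :=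
  {β | (α, β) ∈ A}

/-- The horizontal section `A^α = {γ : (γ, α) ∈ A}`. -/
def horSection (A : Set (Omega1 × Omega1)) (α : Omega1) : Set Omega1 :=
  {γ | (γ, α) ∈ A}

/-- Membership in the σ-ideal `𝓘`: for all but countably many `α ∈ ω₁` both the
vertical and the horizontal section of `A` at `α` are countable. -/
def MemIdealI (A : Set (Omega1 × Omega1)) : Prop :=
  {α : Omega1 | ¬ ((vertSection A α).Countable ∧ (horSection A α).Countable)}.Countable

/-- `F` is a finite graph of a strictly decreasing partial function: `F` is finite,
contains no two pairs with the same first coordinate, and whenever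
`(α,β), (α',β') ∈ F` with `α < α'` then `β > β'`. -/
def IsDecGraph {T : Type*} [LinearOrder T] (F : Set (T × T)) : Prop :=
  F.Finite ∧ (∀ p ∈ F, ∀ q ∈ F, p.1 = q.1 → p = q) ∧
    (∀ p ∈ F, ∀ q ∈ F, p.1 < q.1 → q.2 < p.2)

/-- The characteristic function of a set, with values in `{0,1} = Bool`. -/
def chi {T : Type*} (A : Set T) : T → Bool := fun x => if x ∈ A then true else false

/-- The space `𝒳` (over a linear order `T`) of characteristic functions of finite
graphs of strictly decreasing partial functions on `T`, viewed as a subset of the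
product space `{0,1}^(T × T)`; it carries the subspace topology. -/
def XSpace (T : Type*) [LinearOrder T] : Set ((T × T) → Bool) :=
  {f | ∃ F : Set (T × T), IsDecGraph F ∧ f = chi F}

/-- The space `𝒳_B = {A ∈ 𝒳 : A ⊆ B}`, as a subset of `{0,1}^(ω₁ × ω₁)`. -/
def XSpaceIn (B : Set (Omega1 × Omega1)) : Set ((Omega1 × Omega1) → Bool) :=
  {f | ∃ F : Set (Omega1 × Omega1), IsDecGraph F ∧ F ⊆ B ∧ f = chi F}

/-- The support of a point of `{0,1}^T`: the set of which it is the
characteristic function. -/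
def supp {T : Type*} (f : T → Bool) : Set T := {x | f x = true}

/-- A topological space `X` is bisequential if for every ultrafilter `𝒰` on `X`
converging to a point `x` (every neighbourhood of `x` belongs to `𝒰`) there is a
decreasing sequence `U₀ ⊇ U₁ ⊇ ⋯` of members of `𝒰` converging to `x` (every
neighbourhood of `x` contains `Uₙ` for all sufficiently large `n`). -/
def Bisequential (X : Type*) [TopologicalSpace X] : Prop :=
  ∀ (𝒰 : Ultrafilter X) (x : X), (𝒰 : Filter X) ≤ 𝓝 x →
    ∃ U : ℕ → Set X, (∀ n, U n ∈ 𝒰) ∧ (∀ n, U (n + 1) ⊆ U n) ∧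
      ∀ V ∈ 𝓝 x, ∀ᶠ n in atTop, U n ⊆ V

/-
Let `𝓘` be the σ-ideal of `MemIdealI`. An `𝓘`-positive set `B` has uncountably many
uncountable vertical or horizontal sections, so a point of `B` can be added at the left or right
end of any decreasing graph lying high enough. Hence finitely many `𝓘`-positive sets are met
simultaneously by a graph avoiding any given finite set: the sets "`x` meets `B`" (`B` positive)
together with the neighbourhoods of `∅` have the finite intersection property, and lie in an
ultrafilter `𝒰 → ∅`. If `Uₙ ∈ 𝒰` converged to `∅`, each `Pₙ = {p | no x ∈ Uₙ contains p}`
would lie in `𝓘` (else "meets `Pₙ`" ∈ `𝒰` would be disjoint from `Uₙ`), yet `⋃ Pₙ` is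
everything, which a proper σ-ideal cannot contain. Finally `ω₁ ⊆ α` induces an embedding
`𝒳 → 𝒳_α`, and bisequentiality passes to subspaces.
-/

namespace IsDecGraph

variable {T : Type*} [LinearOrder T]

lemma empty : IsDecGraph (∅ : Set (T × T)) :=
  ⟨Set.finite_empty, by simp, by simp⟩

lemma insert {F : Set (T × T)} (hF : IsDecGraph F) {q : T × T}
    (hq : ∀ p ∈ F, (q.1 < p.1 ∧ p.2 < q.2) ∨ (p.1 < q.1 ∧ q.2 < p.2)) :
    IsDecGraph (insert q F) := by
  refine ⟨hF.1.insert q, ?_, ?_⟩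
  · rintro p (rfl | hp) p' (rfl | hp') h
    · rfl
    · rcases hq p' hp' with h' | h' <;> exact absurd h (by order)
    · rcases hq p hp with h' | h' <;> exact absurd h (by order)
    · exact hF.2.1 p hp p' hp' h
  · rintro p (rfl | hp) p' (rfl | hp') h
    · exact absurd h (lt_irrefl _)
    · rcases hq p' hp' with h' | h'
      · exact h'.2
      · exact absurd h (by order)
    · rcases hq p hp with h' | h'
      · exact absurd h (by order)
      · exact h'.2
    · exact hF.2.2 p hp p' hp' h

lemma image_prodMap {S : Type*} [LinearOrder S] {F : Set (S × S)} (hF : IsDecGraph F)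
    {f : S → T} (hf : StrictMono f) : IsDecGraph (Prod.map f f '' F) := by
  refine ⟨hF.1.image _, ?_, ?_⟩
  · rintro _ ⟨p, hp, rfl⟩ _ ⟨p', hp', rfl⟩ h
    rw [hF.2.1 p hp p' hp' (hf.injective h)]
  · rintro _ ⟨p, hp, rfl⟩ _ ⟨p', hp', rfl⟩ h
    exact hf (hF.2.2 p hp p' hp' (hf.lt_iff_lt.1 h))

end IsDecGraph

namespace XSpace

variable {S T : Type*} [LinearOrder S] [LinearOrder T]

def emptyGraph (T : Type*) [LinearOrder T] : XSpace T :=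
  ⟨chi ∅, ∅, IsDecGraph.empty, rfl⟩

lemma le_nhds_emptyGraph_iff {l : Filter (XSpace T)} :
    l ≤ 𝓝 (emptyGraph T) ↔ ∀ p, ∀ᶠ x in l, x.1 p = false := by
  rw [← tendsto_id', IsInducing.subtypeVal.tendsto_nhds_iff, tendsto_pi_nhds]
  simp [emptyGraph, chi, nhds_discrete]

lemma extend_chi {f : S → T} (hf : StrictMono f) (F : Set (S × S)) :
    Function.extend (Prod.map f f) (chi F) (fun _ => false) = chi (Prod.map f f '' F) := by
  have hinj : Function.Injective (Prod.map f f) := hf.injective.prodMap hf.injective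
  funext q
  by_cases hq : ∃ p, Prod.map f f p = q
  · obtain ⟨p, rfl⟩ := hq
    simp [hinj.extend_apply, chi, hinj.mem_set_image]
  · rw [Function.extend_apply' _ _ _ hq]
    simp_all [chi]

def map {f : S → T} (hf : StrictMono f) (x : XSpace S) : XSpace T :=
  ⟨Function.extend (Prod.map f f) x.1 (fun _ => false), by
    obtain ⟨F, hF, hx⟩ := x.2
    exact ⟨_, hF.image_prodMap hf, hx ▸ extend_chi hf F⟩⟩

lemma isEmbedding_map {f : S → T} (hf : StrictMono f) : IsEmbedding (map hf) := by
  have hinj : Function.Injective (Prod.map f f) := hf.injective.prodMap hf.injective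
  have hext :
      IsEmbedding fun g : S × S → Bool => Function.extend (Prod.map f f) g (fun _ => false) := by
    refine Function.LeftInverse.isEmbedding (f := fun g => g ∘ Prod.map f f)
      (fun g => Function.extend_comp hinj g _) (by fun_prop) (continuous_pi fun q => ?_)
    by_cases hq : ∃ p, Prod.map f f p = q
    · obtain ⟨p, rfl⟩ := hq
      simpa only [hinj.extend_apply] using continuous_apply p
    · simpa only [Function.extend_apply' _ _ _ hq] using continuous_const
  exact (hext.comp IsEmbedding.subtypeVal).codRestrict _ _

end XSpace

lemma Topology.IsEmbedding.bisequential {Y Z : Type*} [TopologicalSpace Y] [TopologicalSpace Z]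
    {e : Y → Z} (he : IsEmbedding e) (h : Bisequential Z) : Bisequential Y := by
  intro 𝒰 y hconv
  obtain ⟨V, hV, hVdec, hVconv⟩ :=
    h (𝒰.map e) (e y) ((Filter.map_mono hconv).trans he.continuous.continuousAt)
  refine ⟨fun n => e ⁻¹' V n, hV, fun n => Set.preimage_mono (hVdec n), fun W hW => ?_⟩
  rw [he.isInducing.nhds_eq_comap] at hW
  obtain ⟨W', hW', hsub⟩ := hW
  exact (hVconv W' hW').mono fun n hn => (Set.preimage_mono hn).trans hsub

namespace Omega1

lemma countable_Iic (σ : Omega1) : (Set.Iic σ).Countable := by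
  have hsucc : Order.succ σ.1 < (Cardinal.aleph 1).ord :=
    (Cardinal.isSuccLimit_ord (Cardinal.aleph0_le_aleph 1)).succ_lt σ.2
  have hIio : (Set.Iio (Order.succ σ.1)).Countable := by
    rw [← Cardinal.le_aleph0_iff_set_countable, Cardinal.mk_Iio_ordinal, Cardinal.lift_le_aleph0,
      ← Cardinal.lt_aleph_one_iff]
    exact Cardinal.lt_ord.1 hsucc
  exact (hIio.preimage Subtype.val_injective).mono fun τ (hτ : τ.1 ≤ σ.1) =>
    Order.lt_succ_of_le hτ

lemma not_countable_univ : ¬ (Set.univ : Set Omega1).Countable := by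
  rw [← Cardinal.le_aleph0_iff_set_countable, Cardinal.mk_univ, Cardinal.mk_Iio_ordinal,
    Cardinal.card_ord, Cardinal.lift_le_aleph0, ← Cardinal.lt_aleph_one_iff]
  exact lt_irrefl _

lemma exists_forall_lt {A C : Set Omega1} (hA : ¬ A.Countable) (hC : C.Finite) :
    ∃ a ∈ A, ∀ c ∈ C, c < a := by
  by_contra! h
  refine hA ((hC.countable.biUnion fun c _ => countable_Iic c).mono fun a ha => ?_)
  obtain ⟨c, hc, hac⟩ := h a ha
  exact Set.mem_biUnion hc hac

end Omega1

lemma MemIdealI.iUnion {P : ℕ → Set (Omega1 × Omega1)} (h : ∀ n, MemIdealI (P n)) :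
    MemIdealI (⋃ n, P n) := by
  refine (Set.countable_iUnion h).mono fun a ha => Set.mem_iUnion.2 ?_
  by_contra! hn
  have hvert : vertSection (⋃ n, P n) a = ⋃ n, vertSection (P n) a := by
    ext; simp [vertSection]
  have hhor : horSection (⋃ n, P n) a = ⋃ n, horSection (P n) a := by
    ext; simp [horSection]
  have hcount (n : ℕ) : (vertSection (P n) a).Countable ∧ (horSection (P n) a).Countable :=
    by simpa using hn n
  refine ha ?_
  rw [hvert, hhor]
  exact ⟨Set.countable_iUnion fun n => (hcount n).1, Set.countable_iUnion fun n => (hcount n).2⟩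

lemma not_memIdealI_univ : ¬ MemIdealI Set.univ := by
  intro h
  refine Omega1.not_countable_univ (h.mono fun a _ => ?_)
  rintro ⟨hvert, -⟩
  exact Omega1.not_countable_univ (by simpa [vertSection] using hvert)

def MeetableAbove (𝓑 : Set (Set (Omega1 × Omega1))) : Prop :=
  ∀ σ : Omega1, ∃ F, IsDecGraph F ∧ (∀ p ∈ F, σ < p.1 ∧ σ < p.2) ∧
    ∀ B ∈ 𝓑, (F ∩ B).Nonempty

lemma meetableAbove_empty : MeetableAbove ∅ :=
  fun _ => ⟨∅, IsDecGraph.empty, by simp, by simp⟩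

lemma meetableAbove_insert {𝓑 : Set (Set (Omega1 × Omega1))} (h𝓑 : MeetableAbove 𝓑)
    {B : Set (Omega1 × Omega1)}
    (hB : ∀ σ : Omega1, ∃ τ, ∀ F, IsDecGraph F → (∀ p ∈ F, τ < p.1 ∧ τ < p.2) →
      ∃ q ∈ B, σ < q.1 ∧ σ < q.2 ∧ IsDecGraph (insert q F)) :
    MeetableAbove (insert B 𝓑) := by
  intro σ
  obtain ⟨τ, hτ⟩ := hB σ
  obtain ⟨F, hF, habove, hmeet⟩ := h𝓑 (max σ τ)
  obtain ⟨q, hqB, hq₁, hq₂, hqF⟩ :=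
    hτ F hF fun p hp => ⟨(le_max_right σ τ).trans_lt (habove p hp).1,
      (le_max_right σ τ).trans_lt (habove p hp).2⟩
  refine ⟨insert q F, hqF, ?_, ?_⟩
  · rintro p (rfl | hp)
    · exact ⟨hq₁, hq₂⟩
    · exact ⟨(le_max_left σ τ).trans_lt (habove p hp).1,
        (le_max_left σ τ).trans_lt (habove p hp).2⟩
  · rintro B' (rfl | hB')
    · exact ⟨q, Set.mem_insert q F, hqB⟩
    · exact (hmeet B' hB').mono (Set.inter_subset_inter_left _ (Set.subset_insert q F))

/-- If uncountably many vertical sections of `B` are uncountable, a point of `B` can be added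
at the left end of any decreasing graph lying high enough; otherwise the same holds for
horizontal sections and the right end. -/
lemma exists_insert_isDecGraph_of_not_memIdealI {B : Set (Omega1 × Omega1)} (hB : ¬ MemIdealI B)
    (σ : Omega1) : ∃ τ, ∀ F, IsDecGraph F → (∀ p ∈ F, τ < p.1 ∧ τ < p.2) →
      ∃ q ∈ B, σ < q.1 ∧ σ < q.2 ∧ IsDecGraph (insert q F) := by
  have hsplit : ¬ {a | ¬ (vertSection B a).Countable}.Countable ∨
      ¬ {a | ¬ (horSection B a).Countable}.Countable := by
    refine not_and_or.1 fun h => hB ((h.1.union h.2).mono fun a ha => ?_)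
    exact not_and_or.1 ha
  rcases hsplit with hvert | hhor
  · obtain ⟨a, ha, hσa⟩ := Omega1.exists_forall_lt hvert (Set.finite_singleton σ)
    refine ⟨a, fun F hF habove => ?_⟩
    obtain ⟨b, hb, hbig⟩ :=
      Omega1.exists_forall_lt ha ((hF.1.image Prod.snd).insert σ)
    refine ⟨(a, b), hb, hσa σ rfl, hbig σ (Set.mem_insert σ _), hF.insert fun p hp => ?_⟩
    exact Or.inl ⟨(habove p hp).1, hbig p.2 (Set.mem_insert_of_mem σ ⟨p, hp, rfl⟩)⟩
  · obtain ⟨c, hc, hσc⟩ := Omega1.exists_forall_lt hhor (Set.finite_singleton σ)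
    refine ⟨c, fun F hF habove => ?_⟩
    obtain ⟨x, hx, hbig⟩ :=
      Omega1.exists_forall_lt hc ((hF.1.image Prod.fst).insert σ)
    refine ⟨(x, c), hx, hbig σ (Set.mem_insert σ _), hσc σ rfl, hF.insert fun p hp => ?_⟩
    exact Or.inr ⟨hbig p.1 (Set.mem_insert_of_mem σ ⟨p, hp, rfl⟩), (habove p hp).2⟩

lemma meetableAbove_of_finite {𝓑 : Set (Set (Omega1 × Omega1))} (h𝓑 : 𝓑.Finite)
    (hpos : ∀ B ∈ 𝓑, ¬ MemIdealI B) : MeetableAbove 𝓑 := by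
  induction 𝓑, h𝓑 using Set.Finite.induction_on with
  | empty => exact meetableAbove_empty
  | @insert B 𝓑 _ _ ih =>
    exact meetableAbove_insert (ih fun B' hB' => hpos B' (Set.mem_insert_of_mem B hB'))
      (exists_insert_isDecGraph_of_not_memIdealI (hpos B (Set.mem_insert B 𝓑)))


def hitting (B : Set (Omega1 × Omega1)) : Set (XSpace Omega1) :=
  {x | ∃ p ∈ B, x.1 p = true}

abbrev IPositiveSet : Type 1 := {B : Set (Omega1 × Omega1) // ¬ MemIdealI B}

def hittingBasicSet (i : Finset (Omega1 × Omega1) × Finset IPositiveSet) : Set (XSpace Omega1) :=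
  {x | (∀ p ∈ i.1, x.1 p = false) ∧ ∀ B ∈ i.2, x ∈ hitting B.1}

lemma hittingBasicSet_antitone : Antitone hittingBasicSet :=
  fun _ _ hij _ hx => ⟨fun p hp => hx.1 p (hij.1 hp), fun B hB => hx.2 B (hij.2 hB)⟩

lemma hittingBasicSet_nonempty (i : Finset (Omega1 × Omega1) × Finset IPositiveSet) :
    (hittingBasicSet i).Nonempty := by
  obtain ⟨M, -, hM⟩ :=
    Omega1.exists_forall_lt Omega1.not_countable_univ (i.1.finite_toSet.image Prod.fst)
  obtain ⟨F, hF, habove, hmeet⟩ :=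
    meetableAbove_of_finite (i.2.finite_toSet.image Subtype.val) (by
      rintro _ ⟨B, -, rfl⟩
      exact B.2) M
  refine ⟨⟨chi F, F, hF, rfl⟩, fun p hp => ?_, fun B hB => ?_⟩
  · have hpF : p ∉ F := fun hpF => (hM p.1 ⟨p, hp, rfl⟩).not_gt (habove p hpF).1
    simp [chi, hpF]
  · obtain ⟨p, hpF, hpB⟩ := hmeet B.1 ⟨B, hB, rfl⟩
    exact ⟨p, hpB, by simp [chi, hpF]⟩

lemma exists_ultrafilter_le_nhds_emptyGraph_hitting :
    ∃ 𝒰 : Ultrafilter (XSpace Omega1), ↑𝒰 ≤ 𝓝 (XSpace.emptyGraph Omega1) ∧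
      ∀ B, ¬ MemIdealI B → hitting B ∈ 𝒰 := by
  have hbasic (i) : hittingBasicSet i ∈ ⨅ j, 𝓟 (hittingBasicSet j) :=
    mem_iInf_of_mem i (mem_principal_self _)
  have : (⨅ j, 𝓟 (hittingBasicSet j)).NeBot :=
    iInf_neBot_of_directed'
      (directed_of_isDirected_le fun _ _ hij => principal_mono.2 (hittingBasicSet_antitone hij))
      fun i => principal_neBot_iff.2 (hittingBasicSet_nonempty i)
  obtain ⟨𝒰, h𝒰⟩ := Ultrafilter.exists_le (⨅ j, 𝓟 (hittingBasicSet j))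
  refine ⟨𝒰, XSpace.le_nhds_emptyGraph_iff.2 fun p => ?_, fun B hB => ?_⟩
  · exact h𝒰 (mem_of_superset (hbasic ({p}, ∅)) fun x hx => hx.1 p (Finset.mem_singleton_self p))
  · exact h𝒰 (mem_of_superset (hbasic (∅, {⟨B, hB⟩})) fun x hx =>
      hx.2 _ (Finset.mem_singleton_self _))

lemma memIdealI_of_mem_ultrafilter {𝒰 : Ultrafilter (XSpace Omega1)}
    (h𝒰 : ∀ B, ¬ MemIdealI B → hitting B ∈ 𝒰) {U : Set (XSpace Omega1)} (hU : U ∈ 𝒰) :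
    MemIdealI {p | ∀ x ∈ U, x.1 p = false} := by
  by_contra hpos
  obtain ⟨x, hxU, p, hp, hxp⟩ := 𝒰.nonempty_of_mem (inter_mem hU (h𝒰 _ hpos))
  simp [hp x hxU] at hxp

lemma not_bisequential_XSpace_omega1 : ¬ Bisequential (XSpace Omega1) := by
  intro hbis
  obtain ⟨𝒰, hle, hhit⟩ := exists_ultrafilter_le_nhds_emptyGraph_hitting
  obtain ⟨U, hU, -, hUconv⟩ := hbis 𝒰 _ hle
  have hcover : ⋃ n, {p | ∀ x ∈ U n, x.1 p = false} = Set.univ := by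
    refine Set.eq_univ_of_forall fun p => ?_
    have hp := XSpace.le_nhds_emptyGraph_iff.1 le_rfl p
    obtain ⟨n, hn⟩ := (hUconv _ hp).exists
    exact Set.mem_iUnion.2 ⟨n, fun x hx => hn hx⟩
  exact not_memIdealI_univ
    (hcover ▸ MemIdealI.iUnion fun n => memIdealI_of_mem_ultrafilter hhit (hU n))

/-- For every ordinal `α ≥ ω₁`, the space `𝒳_α` of finite graphs of strictly
decreasing partial functions from `α` to `α` (a subspace of `{0,1}^(α × α)`) is not
bisequential; indeed `𝒳 = 𝒳_{ω₁}` embeds homeomorphically into `𝒳_α`. -/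
theorem XSpace_ordinal_not_bisequential (α : Ordinal.{0})
    (hα : (Cardinal.aleph 1).ord ≤ α) :
    (∃ e : ↥(XSpace Omega1) → ↥(XSpace ↥(Set.Iio α)), IsEmbedding e) ∧
    ¬ Bisequential ↥(XSpace ↥(Set.Iio α)) := by
  have hmono : StrictMono (Set.inclusion (Set.Iio_subset_Iio hα)) := fun _ _ h => h
  have hemb := XSpace.isEmbedding_map hmono
  exact ⟨⟨_, hemb⟩, fun h => not_bisequential_XSpace_omega1 (hemb.bisequential h)⟩

end
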